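/- (Superlinear bound for clustered eigenvalues) Suppose the eigenvalues cluster: λᵢ = γ_{j(i)} + εᵢ for some assignment j(i) ∈ {1,…,s}, where γ₁,…,γ_s ∈ ℂ are nonzero and |εᵢ| ≤ ε ≤ 1 for all i. Let f(γ) = (−1)^{s−1} (∏_{j=1}^s γⱼ)^{−1} ∏_{j=1}^s (γ − γⱼ). Then there exists z ∈ K_s(A, r₀) such that ‖r₀ − A z‖₂ ≤ ‖W‖₂ · ε · √d · max_{1 ≤ j ≤ s} Σ_{l=1}^s |f^{(l)}(γⱼ)| / l!. -/

import Mathlib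

/-- The Euclidean (ℓ²) norm of a complex vector. -/
noncomputable def euclNorm {m : ℕ} (x : Fin m → ℂ) : ℝ :=
  Real.sqrt (∑ t, ‖x t‖ ^ 2)

/-- The operator 2-norm of a complex matrix (induced by Euclidean norms). -/
noncomputable def l2OpNorm {m k : ℕ} (W : Matrix (Fin m) (Fin k) ℂ) : ℝ :=
  ‖LinearMap.toContinuousLinearMap (Matrix.toEuclideanLin W)‖

/-! With `p = -f`, which has degree `≤ s` and `p(0) = 1`, write `1 - p = X q`; then
`z = q(A) r₀ ∈ K_s(A, r₀)` and `r₀ - A z = p(A) r₀ = W (p(λᵢ))ᵢ`. Expanding `p` in its Taylor series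
at the centre `γ_{j(i)}`, a root of `f`, the constant term vanishes, so with `|εᵢ| ≤ ε ≤ 1`
every remaining term is bounded using `|εᵢ|^l ≤ ε`. -/

open Polynomial Matrix Finset
open scoped Nat

namespace Matrix

variable {R : Type*} [CommRing R] {n : Type*} [Fintype n] [DecidableEq n]

theorem aeval_mulVec_of_mulVec_eq_smul {A : Matrix n n R} {w : n → R} {μ : R}
    (h : A *ᵥ w = μ • w) (p : R[X]) : aeval A p *ᵥ w = p.eval μ • w := by
  have := Module.End.aeval_apply_of_mem_apply_eq_smul (f := toLinAlgEquiv' A) (p := p) h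
  rwa [aeval_algHom_apply] at this

def krylovSubspace (A : Matrix n n R) (r : n → R) (k : ℕ) : Submodule R (n → R) :=
  Submodule.span R (Set.range fun j : Fin k => (A ^ (j : ℕ)) *ᵥ r)

theorem aeval_mulVec_mem_krylovSubspace (A : Matrix n n R) (r : n → R) {q : R[X]} {k : ℕ}
    (hq : q.natDegree < k) : aeval A q *ᵥ r ∈ krylovSubspace A r k := by
  rw [aeval_eq_sum_range' hq, sum_mulVec]
  refine Submodule.sum_mem _ fun j hj => ?_
  rw [smul_mulVec]
  exact Submodule.smul_mem _ _ (Submodule.subset_span ⟨⟨j, mem_range.mp hj⟩, rfl⟩)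

theorem exists_mem_krylovSubspace_sub_mulVec_eq (A : Matrix n n R) (r : n → R) {p : R[X]}
    {k : ℕ} (hk : 1 ≤ k) (hp0 : p.eval 0 = 1) (hpk : p.natDegree ≤ k) :
    ∃ z ∈ krylovSubspace A r k, r - A *ᵥ z = aeval A p *ᵥ r := by
  set q := (1 - p).divX
  have hXq : X * q = 1 - p := by
    have h0 : (1 - p).coeff 0 = 0 := by
      rw [coeff_zero_eq_eval_zero, eval_sub, eval_one, hp0, sub_self]
    have := X_mul_divX_add (1 - p)
    rwa [h0, C_0, add_zero] at this
  have hq : q.natDegree < k := by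
    have : (1 - p).natDegree ≤ k :=
      (natDegree_sub_le_of_le (by simp) hpk).trans (max_self k).le
    rw [natDegree_divX_eq_natDegree_tsub_one]
    omega
  refine ⟨aeval A q *ᵥ r, aeval_mulVec_mem_krylovSubspace A r hq, ?_⟩
  calc r - A *ᵥ (aeval A q *ᵥ r) = aeval A (1 - X * q) *ᵥ r := by
        rw [mulVec_mulVec, map_sub, map_one, map_mul, aeval_X, sub_mulVec, one_mulVec]
    _ = aeval A p *ᵥ r := by rw [hXq, sub_sub_cancel]

theorem aeval_mulVec_sum_smul_eq_mulVec_eval {ι : Type*} [Fintype ι] (A : Matrix n n R)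
    (v : ι → n → R) (lam c : ι → R) (heig : ∀ i, A *ᵥ v i = lam i • v i) (p : R[X]) :
    aeval A p *ᵥ ∑ i, c i • v i = of (fun t i => c i * v i t) *ᵥ fun i => p.eval (lam i) := by
  simp only [mulVec_sum, mulVec_smul, aeval_mulVec_of_mulVec_eq_smul (heig _), smul_smul]
  ext t
  simp [mulVec, dotProduct, mul_comm, mul_assoc]

end Matrix

theorem euclNorm_eq_norm_toLp {m : ℕ} (x : Fin m → ℂ) : euclNorm x = ‖WithLp.toLp 2 x‖ := by
  simp [euclNorm, EuclideanSpace.norm_eq]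

theorem euclNorm_mulVec_le {m k : ℕ} (W : Matrix (Fin m) (Fin k) ℂ) (u : Fin k → ℂ) :
    euclNorm (W *ᵥ u) ≤ l2OpNorm W * euclNorm u := by
  simpa [euclNorm_eq_norm_toLp, l2OpNorm] using
    (LinearMap.toContinuousLinearMap (toEuclideanLin W)).le_opNorm (WithLp.toLp 2 u)

theorem euclNorm_le_sqrt_card_mul {m : ℕ} {x : Fin m → ℂ} {M : ℝ} (hM : 0 ≤ M)
    (hx : ∀ i, ‖x i‖ ≤ M) : euclNorm x ≤ √m * M := by
  calc euclNorm x ≤ √(∑ _i : Fin m, M ^ 2) :=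
        Real.sqrt_le_sqrt (sum_le_sum fun i _ => pow_le_pow_left₀ (norm_nonneg _) (hx i) 2)
    _ = √m * M := by simp [Real.sqrt_mul, Real.sqrt_sq hM]

namespace Polynomial

section Nodal

variable {R : Type*} [CommRing R] {s : ℕ}

theorem isRoot_C_mul_prod_X_sub_C (a : R) (γ : Fin s → R) (j : Fin s) :
    (C a * ∏ i, (X - C (γ i))).IsRoot (γ j) :=
  show eval _ (C a * Lagrange.nodal univ γ) = 0 by
    rw [eval_mul, Lagrange.eval_nodal_at_node (mem_univ j), mul_zero]

theorem natDegree_C_mul_prod_X_sub_C_le [Nontrivial R] (a : R) (γ : Fin s → R) :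
    (C a * ∏ i, (X - C (γ i))).natDegree ≤ s :=
  (natDegree_C_mul_le a (Lagrange.nodal univ γ)).trans (by simp [Lagrange.natDegree_nodal])

theorem eval_zero_normalized_prod_X_sub_C {K : Type*} [Field K] {γ : Fin s → K} (hs : 1 ≤ s)
    (hγ : ∀ j, γ j ≠ 0) :
    (C ((-1) ^ (s - 1) * (∏ j, γ j)⁻¹) * ∏ j, (X - C (γ j))).eval 0 = -1 := by
  have hprod : ∏ j, γ j ≠ 0 := prod_ne_zero_iff.mpr fun j _ => hγ j
  simp only [eval_mul, eval_C, eval_prod, eval_sub, eval_X, zero_sub, prod_neg, card_univ,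
    Fintype.card_fin]
  calc (-1) ^ (s - 1) * (∏ j, γ j)⁻¹ * ((-1) ^ s * ∏ j, γ j) = (-1) ^ (s - 1 + s) := by
        rw [pow_add]; field_simp
    _ = -1 := Odd.neg_one_pow ⟨s - 1, by omega⟩

end Nodal

section Taylor

variable {K : Type*} [Field K] [CharZero K]

theorem coeff_taylor_eq_iterate_derivative_div (p : K[X]) (γ : K) (l : ℕ) :
    (taylor γ p).coeff l = (derivative^[l] p).eval γ / l ! := by
  rw [taylor_coeff, ← factorial_smul_hasseDeriv,
    eq_div_iff (by exact_mod_cast l.factorial_ne_zero)]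
  simp [mul_comm]

theorem eval_add_eq_sum_iterate_derivative {p : K[X]} {N : ℕ} (hp : p.natDegree < N) (γ e : K) :
    p.eval (γ + e) = ∑ l ∈ range N, (derivative^[l] p).eval γ / l ! * e ^ l := by
  rw [add_comm, ← taylor_eval, eval_eq_sum_range' (by rwa [natDegree_taylor])]
  simp [coeff_taylor_eq_iterate_derivative_div]

theorem norm_eval_add_le_of_isRoot {𝕜 : Type*} [RCLike 𝕜] {p : 𝕜[X]} {s : ℕ}
    (hp : p.natDegree ≤ s) {γ : 𝕜} (hγ : p.IsRoot γ) {e : 𝕜} {ε : ℝ} (he : ‖e‖ ≤ ε)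
    (hε : ε ≤ 1) :
    ‖p.eval (γ + e)‖ ≤ ε * ∑ l ∈ Icc 1 s, ‖(derivative^[l] p).eval γ‖ / l ! := by
  rw [eval_add_eq_sum_iterate_derivative (Nat.lt_succ_of_le hp), range_eq_Ico,
    sum_eq_sum_Ico_succ_bot (Nat.succ_pos s)]
  simp only [Function.iterate_zero, id, hγ.eq_zero, zero_div, zero_mul, zero_add, mul_sum]
  refine (norm_sum_le _ _).trans (sum_le_sum fun l hl => ?_)
  have hl : 1 ≤ l := (mem_Ico.mp hl).1
  have hel : ‖e‖ ^ l ≤ ε := (pow_le_pow_left₀ (norm_nonneg e) he l).trans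
    (pow_le_of_le_one ((norm_nonneg e).trans he) hε (by omega))
  rw [norm_mul, norm_div, norm_pow, RCLike.norm_natCast, mul_comm ε]
  exact mul_le_mul_of_nonneg_left hel (by positivity)

end Taylor

end Polynomial

theorem gmres_superlinear_clustered_bound_general
    (n d : ℕ) (A : Matrix (Fin n) (Fin n) ℂ)
    (v : Fin d → (Fin n → ℂ)) (lam : Fin d → ℂ) (c : Fin d → ℂ)
    (heig : ∀ i, A.mulVec (v i) = lam i • v i)
    (r₀ : Fin n → ℂ) (hr₀ : r₀ = ∑ i, c i • v i)
    (W : Matrix (Fin n) (Fin d) ℂ) (hW : W = Matrix.of fun t i => c i * v i t)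
    (s : ℕ) (hs : 1 ≤ s)
    (γ : Fin s → ℂ) (hγ : ∀ j, γ j ≠ 0)
    (assign : Fin d → Fin s) (eps : Fin d → ℂ)
    (hlam : ∀ i, lam i = γ (assign i) + eps i)
    (ε : ℝ) (hε : ε ∈ Set.Icc (0 : ℝ) 1) (heps : ∀ i, ‖eps i‖ ≤ ε)
    (f : Polynomial ℂ)
    (hf : f = Polynomial.C ((-1 : ℂ) ^ (s - 1) * (∏ j, γ j)⁻¹) *
        ∏ j, (Polynomial.X - Polynomial.C (γ j))) :
    ∃ z ∈ Submodule.span ℂ (Set.range fun j : Fin s => (A ^ (j : ℕ)).mulVec r₀),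
      euclNorm (r₀ - A.mulVec z) ≤
        l2OpNorm W * ε * Real.sqrt d *
          ⨆ j : Fin s, ∑ l ∈ Finset.Icc 1 s,
            ‖(Polynomial.derivative^[l] f).eval (γ j)‖ / (Nat.factorial l : ℝ) := by
  obtain ⟨hε0, hε1⟩ := hε
  have hroot : ∀ j, f.IsRoot (γ j) := hf ▸ isRoot_C_mul_prod_X_sub_C _ γ
  have hdeg : f.natDegree ≤ s := hf ▸ natDegree_C_mul_prod_X_sub_C_le _ γ
  have hf0 : f.eval 0 = -1 := hf ▸ eval_zero_normalized_prod_X_sub_C hs hγ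
  obtain ⟨z, hz, hres⟩ := exists_mem_krylovSubspace_sub_mulVec_eq A r₀ (p := -f) hs
    (by rw [eval_neg, hf0, neg_neg]) (by rwa [natDegree_neg])
  set S := fun j : Fin s => ∑ l ∈ Icc 1 s, ‖(derivative^[l] f).eval (γ j)‖ / (l ! : ℝ)
  have hS : BddAbove (Set.range S) := (Set.finite_range S).bddAbove
  have hM : 0 ≤ ε * ⨆ j, S j :=
    mul_nonneg hε0 ((sum_nonneg fun _ _ => by positivity).trans (le_ciSup hS ⟨0, hs⟩))
  have hu : ∀ i, ‖(-f).eval (lam i)‖ ≤ ε * ⨆ j, S j := fun i => by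
    rw [eval_neg, norm_neg, hlam]
    exact (norm_eval_add_le_of_isRoot hdeg (hroot _) (heps i) hε1).trans
      (mul_le_mul_of_nonneg_left (le_ciSup hS _) hε0)
  refine ⟨z, hz, ?_⟩
  rw [hres, hr₀, aeval_mulVec_sum_smul_eq_mulVec_eval A v lam c heig, ← hW]
  calc _ ≤ l2OpNorm W * euclNorm _ := euclNorm_mulVec_le W _
    _ ≤ l2OpNorm W * (√d * (ε * ⨆ j, S j)) :=
        mul_le_mul_of_nonneg_left (euclNorm_le_sqrt_card_mul hM hu) (norm_nonneg _)
    _ = _ := by ring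

/-- superlinear bound for clustered eigenvalues: if the eigenvalues
cluster as `λᵢ = γ_{j(i)} + εᵢ` around nonzero centers `γ₁,…,γ_s` with `|εᵢ| ≤ ε ≤ 1`,
and `f(γ) = (−1)^{s−1} (∏ γⱼ)⁻¹ ∏ (γ − γⱼ)`, then there is `z ∈ K_s(A, r₀)` with
`‖r₀ − A z‖₂ ≤ ‖W‖₂ ε √d max_{1≤j≤s} ∑_{l=1}^s |f^{(l)}(γⱼ)|/l!`. -/
theorem gmres_superlinear_clustered_bound
    (n d : ℕ) (A : Matrix (Fin n) (Fin n) ℂ)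
    (v : Fin d → (Fin n → ℂ)) (lam : Fin d → ℂ) (c : Fin d → ℂ)
    (hunit : ∀ i, euclNorm (v i) = 1)
    (heig : ∀ i, A.mulVec (v i) = lam i • v i)
    (hnz : ∀ i, lam i ≠ 0) (hdist : Function.Injective lam)
    (r₀ : Fin n → ℂ) (hr₀ : r₀ = ∑ i, c i • v i)
    (W : Matrix (Fin n) (Fin d) ℂ) (hW : W = Matrix.of fun t i => c i * v i t)
    (s : ℕ) (hs : 1 ≤ s)
    (γ : Fin s → ℂ) (hγ : ∀ j, γ j ≠ 0)
    (assign : Fin d → Fin s) (eps : Fin d → ℂ)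
    (hlam : ∀ i, lam i = γ (assign i) + eps i)
    (ε : ℝ) (hε : ε ∈ Set.Icc (0 : ℝ) 1) (heps : ∀ i, ‖eps i‖ ≤ ε)
    (f : Polynomial ℂ)
    (hf : f = Polynomial.C ((-1 : ℂ) ^ (s - 1) * (∏ j, γ j)⁻¹) *
        ∏ j, (Polynomial.X - Polynomial.C (γ j))) :
    ∃ z ∈ Submodule.span ℂ (Set.range fun j : Fin s => (A ^ (j : ℕ)).mulVec r₀),
      euclNorm (r₀ - A.mulVec z) ≤
        l2OpNorm W * ε * Real.sqrt d *
          ⨆ j : Fin s, ∑ l ∈ Finset.Icc 1 s,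
            ‖(Polynomial.derivative^[l] f).eval (γ j)‖ / (Nat.factorial l : ℝ) :=
  gmres_superlinear_clustered_bound_general n d A v lam c heig r₀ hr₀ W hW s hs γ hγ assign eps hlam
    ε hε heps f hf
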